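/- arXiv:1710.05795 — 2 statements merged into one kernel-verified Lean document; each statement's English description precedes it below -/
import Mathlib

section
/- Define polynomials b_{n,k}(q) in ℝ[q] by b_{0,0}(q) = 1, b_{n,k}(q) = 0 unless 0 ≤ k ≤ n, b_{n+1,0}(q) = (1+q+q²)·b_{n,0}(q) + q·b_{n,1}(q), and b_{n+1,k}(q) = b_{n,k−1}(q) + (1+q+q²)·b_{n,k}(q) + q·b_{n,k+1}(q) for 1 ≤ k ≤ n. Then the sequence (b_{n,0}(q))_{n ≥ 0} is a Stieltjes moment sequence of polynomials, i.e., the Hankel matrix [b_{i+j,0}(q)]_{i,j ≥ 0} is q-totally positive. -/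
/-- A real polynomial in one variable `q` is `q`-nonnegative if all of its
coefficients are nonnegative. -/
def QPolyNonneg (f : Polynomial ℝ) : Prop :=
  ∀ i : ℕ, 0 ≤ f.coeff i

/-- An infinite matrix of real polynomials in `q` is `q`-totally positive if
every minor has all nonnegative coefficients. -/
def qTP (M : ℕ → ℕ → Polynomial ℝ) : Prop :=
  ∀ (k : ℕ) (r c : Fin k → ℕ), StrictMono r → StrictMono c →
    QPolyNonneg (Matrix.det (Matrix.of fun i j => M (r i) (c j)))

/-! The triangle is generated by the tridiagonal production matrix `J` with diagonal
`1 + q + q²`, superdiagonal `1` and subdiagonal `q`: row `n + 1` of `b` is row `n` times `J`.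
Expanding minors of `J` along their first row or column shows that `J` is `q`-totally positive,
provided one carries along the stronger bound `det - q · det(tail) ≥ 0` for minors whose first row
and column index agree; this is where `1 + q + q² - 1 - q = q²` enters. Cauchy–Binet then makes
the triangle `q`-totally positive row by row. Finally `J · diag(qˡ)` is symmetric, which gives
`b (i + j) 0 = ∑ₗ b i l · qˡ · b j l`: the Hankel matrix is `B · diag(qˡ) · Bᵀ`, and Cauchy–Binet
applies once more. -/

open Finset

namespace Matrix

variable {R : Type*} [CommRing R] {k L : ℕ}

theorem det_mul_eq_sum_prod_mul_det_submatrix (X : Matrix (Fin k) (Fin L) R)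
    (Y : Matrix (Fin L) (Fin k) R) :
    (X * Y).det = ∑ p : Fin k → Fin L, (∏ i, Y (p i) i) * (X.submatrix id p).det := by
  simp only [det_apply', mul_apply, prod_univ_sum, mul_sum, Fintype.piFinset_univ,
    submatrix_apply, id]
  rw [sum_comm]
  refine sum_congr rfl fun p _ => sum_congr rfl fun σ _ => ?_
  rw [prod_mul_distrib]
  ring

/-- The Cauchy–Binet formula. -/
theorem det_mul_eq_sum_strictMono (X : Matrix (Fin k) (Fin L) R)
    (Y : Matrix (Fin L) (Fin k) R) :
    (X * Y).det = ∑ f ∈ univ.filter (StrictMono : (Fin k → Fin L) → Prop),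
      (X.submatrix id f).det * (Y.submatrix f id).det := by
  classical
  rw [det_mul_eq_sum_prod_mul_det_submatrix]
  simp only [det_apply (Y.submatrix _ id), submatrix_apply, id, mul_sum, ← sum_product']
  symm
  refine sum_of_injOn (fun fσ => fσ.1 ∘ fσ.2) ?_ (fun _ _ => mem_coe.2 (mem_univ _)) ?_ ?_
  · rintro ⟨f, σ⟩ hfσ ⟨g, τ⟩ hgτ (h : f ∘ σ = g ∘ τ)
    simp only [coe_product, coe_filter, mem_univ, true_and, Set.mem_prod, Set.mem_ofPred_eq,
      coe_univ, Set.mem_univ, and_true] at hfσ hgτ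
    have hfg : f = g := by
      rw [← hfσ.range_inj hgτ, ← σ.surjective.range_comp f, ← τ.surjective.range_comp g]
      exact congrArg Set.range h
    subst hfg
    simp only [Prod.mk.injEq, true_and]
    exact Equiv.ext fun i => hfσ.injective (congrFun h i)
  · intro p _ hp
    suffices ¬ Function.Injective p by
      obtain ⟨i, j, hij, hne⟩ : ∃ i j, p i = p j ∧ i ≠ j := by
        simpa [Function.Injective] using this
      rw [det_zero_of_column_eq hne fun l => by simp [hij], mul_zero]
    intro hinj
    refine hp ⟨(p ∘ Tuple.sort p, (Tuple.sort p)⁻¹), ?_, ?_⟩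
    · simpa using (Tuple.monotone_sort p).strictMono_of_injective
        (hinj.comp (Tuple.sort p).injective)
    · ext i; simp
  · rintro ⟨f, σ⟩ _
    simp only [Function.comp_apply]
    rw [show X.submatrix id (f ∘ σ) = (X.submatrix id f).submatrix id σ from rfl, det_permute',
      Units.smul_def, zsmul_eq_mul]
    ring

end Matrix

section Minors

variable {R : Type*} [CommRing R]

def minor (M : ℕ → ℕ → R) {k : ℕ} (r c : Fin k → ℕ) : R :=
  (Matrix.of fun i j => M (r i) (c j)).det

def IsTotallyNonneg (P : Subsemiring R) (M : ℕ → ℕ → R) : Prop :=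
  ∀ k (r c : Fin k → ℕ), StrictMono r → StrictMono c → minor M r c ∈ P

variable {M : ℕ → ℕ → R} {k : ℕ}

@[simp]
theorem minor_fin_zero (r c : Fin 0 → ℕ) : minor M r c = 1 :=
  Matrix.det_isEmpty

theorem minor_eq_zero_of_row (r c : Fin k → ℕ) (i : Fin k) (h : ∀ j, M (r i) (c j) = 0) :
    minor M r c = 0 :=
  Matrix.det_eq_zero_of_row_eq_zero i h

theorem minor_eq_zero_of_col (r c : Fin k → ℕ) (j : Fin k) (h : ∀ i, M (r i) (c j) = 0) :
    minor M r c = 0 :=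
  Matrix.det_eq_zero_of_column_eq_zero j h

theorem minor_succ_of_row (r c : Fin (k + 1) → ℕ) (h : ∀ j : Fin k, M (r 0) (c j.succ) = 0) :
    minor M r c = M (r 0) (c 0) * minor M (r ∘ Fin.succ) (c ∘ Fin.succ) := by
  rw [minor, Matrix.det_succ_row_zero, Fin.sum_univ_succ]
  simp [h]
  rfl

theorem minor_succ_of_col (r c : Fin (k + 1) → ℕ) (h : ∀ i : Fin k, M (r i.succ) (c 0) = 0) :
    minor M r c = M (r 0) (c 0) * minor M (r ∘ Fin.succ) (c ∘ Fin.succ) := by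
  rw [minor, Matrix.det_succ_column_zero, Fin.sum_univ_succ]
  simp [h]
  rfl

theorem minor_succ_succ_of_col (r c : Fin (k + 2) → ℕ)
    (h : ∀ i : Fin k, M (r i.succ.succ) (c 0) = 0) :
    minor M r c = M (r 0) (c 0) * minor M (r ∘ Fin.succ) (c ∘ Fin.succ)
      - M (r 1) (c 0) * minor M (r ∘ Fin.succAbove 1) (c ∘ Fin.succ) := by
  rw [minor, Matrix.det_succ_column_zero, Fin.sum_univ_succ, Fin.sum_univ_succ]
  simp [h, sub_eq_add_neg]
  rfl

theorem minor_mem_of_eq_sum_mul {P : Subsemiring R} {A B : ℕ → ℕ → R} {L : ℕ}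
    {r c : Fin k → ℕ} (hM : ∀ i j, M (r i) (c j) = ∑ l ∈ range L, A (r i) l * B l (c j))
    (hA : ∀ f : Fin k → ℕ, StrictMono f → minor A r f ∈ P)
    (hB : ∀ f : Fin k → ℕ, StrictMono f → minor B f c ∈ P) :
    minor M r c ∈ P := by
  have hprod : minor M r c = (Matrix.of (fun i (l : Fin L) => A (r i) l) *
      Matrix.of fun (l : Fin L) j => B l (c j)).det := by
    unfold minor
    congr 1
    ext i j
    simp [Matrix.mul_apply, hM, Fin.sum_univ_eq_sum_range (fun l => A (r i) l * B l (c j))]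
  rw [hprod, Matrix.det_mul_eq_sum_strictMono]
  exact P.sum_mem fun f hf => P.mul_mem
    (hA _ (Fin.val_strictMono.comp (mem_filter.1 hf).2))
    (hB _ (Fin.val_strictMono.comp (mem_filter.1 hf).2))

end Minors

section Tridiagonal

variable {R : Type*} [CommRing R] {P : Subsemiring R} {s t : R}

def tridiag (s t : R) (l m : ℕ) : R :=
  if l = m + 1 then t else if l = m then s else if l + 1 = m then 1 else 0

@[simp]
theorem tridiag_self (m : ℕ) : tridiag s t m m = s := by
  simp [tridiag]

@[simp]
theorem tridiag_succ_self (m : ℕ) : tridiag s t (m + 1) m = t := by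
  simp [tridiag]

@[simp]
theorem tridiag_self_succ (m : ℕ) : tridiag s t m (m + 1) = 1 := by
  rw [tridiag, if_neg (by omega), if_neg (by omega), if_pos rfl]

theorem tridiag_eq_zero_below {l m : ℕ} (h : m + 2 ≤ l) : tridiag s t l m = 0 := by
  rw [tridiag, if_neg (by omega), if_neg (by omega), if_neg (by omega)]

theorem tridiag_eq_zero_above {l m : ℕ} (h : l + 2 ≤ m) : tridiag s t l m = 0 := by
  rw [tridiag, if_neg (by omega), if_neg (by omega), if_neg (by omega)]

theorem tridiag_eq_add (l m : ℕ) : tridiag s t l m =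
    (if l = m + 1 then t else 0) + (if l = m then s else 0) + (if l + 1 = m then 1 else 0) := by
  unfold tridiag
  split_ifs <;> first | omega | simp

theorem tridiag_mul_pow_symm (l m : ℕ) : tridiag s t l m * t ^ m = tridiag s t m l * t ^ l := by
  unfold tridiag
  split_ifs <;> first | omega | (subst_vars; ring)

variable {k : ℕ}

theorem minor_tridiag_mem (ht : t ∈ P)
    (hk : ∀ r c : Fin k → ℕ, StrictMono r → StrictMono c → minor (tridiag s t) r c ∈ P)
    (hdiag : ∀ r c : Fin (k + 1) → ℕ, StrictMono r → StrictMono c → r 0 = c 0 →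
      minor (tridiag s t) r c - t * minor (tridiag s t) (r ∘ Fin.succ) (c ∘ Fin.succ) ∈ P)
    {r c : Fin (k + 1) → ℕ} (hr : StrictMono r) (hc : StrictMono c) :
    minor (tridiag s t) r c ∈ P := by
  have htail := hk _ _ (hr.comp (Fin.strictMono_succ)) (hc.comp (Fin.strictMono_succ))
  have hr0 (i : Fin k) : r 0 < r i.succ := hr (Fin.succ_pos i)
  have hc0 (j : Fin k) : c 0 < c j.succ := hc (Fin.succ_pos j)
  have hr0' (i : Fin (k + 1)) : r 0 ≤ r i := hr.monotone (Fin.zero_le i)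
  have hc0' (j : Fin (k + 1)) : c 0 ≤ c j := hc.monotone (Fin.zero_le j)
  rcases (by omega : c 0 + 2 ≤ r 0 ∨ r 0 = c 0 + 1 ∨ r 0 = c 0 ∨ c 0 = r 0 + 1 ∨ r 0 + 2 ≤ c 0)
    with h | h | h | h | h
  · rw [minor_eq_zero_of_col r c 0 fun i => tridiag_eq_zero_below (by grind)]
    exact P.zero_mem
  · rw [minor_succ_of_col r c fun i => tridiag_eq_zero_below (by grind), h, tridiag_succ_self]
    exact P.mul_mem ht htail
  · rw [← sub_add_cancel (minor _ r c) (t * _)]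
    exact P.add_mem (hdiag r c hr hc h) (P.mul_mem ht htail)
  · rw [minor_succ_of_row r c fun j => tridiag_eq_zero_above (by grind), h, tridiag_self_succ,
      one_mul]
    exact htail
  · rw [minor_eq_zero_of_row r c 0 fun j => tridiag_eq_zero_above (by grind)]
    exact P.zero_mem

theorem minor_tridiag_sub_mem (hst : s - 1 - t ∈ P)
    (hk : ∀ r c : Fin (k + 1) → ℕ, StrictMono r → StrictMono c → minor (tridiag s t) r c ∈ P)
    (hdiag : ∀ r c : Fin (k + 1) → ℕ, StrictMono r → StrictMono c → r 0 = c 0 →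
      minor (tridiag s t) r c - t * minor (tridiag s t) (r ∘ Fin.succ) (c ∘ Fin.succ) ∈ P)
    {r c : Fin (k + 2) → ℕ} (hr : StrictMono r) (hc : StrictMono c) (h0 : r 0 = c 0) :
    minor (tridiag s t) r c - t * minor (tridiag s t) (r ∘ Fin.succ) (c ∘ Fin.succ) ∈ P := by
  have htail := hk _ _ (hr.comp (Fin.strictMono_succ)) (hc.comp (Fin.strictMono_succ))
  set tail := minor (tridiag s t) (r ∘ Fin.succ) (c ∘ Fin.succ)
  have hr1 (i : Fin (k + 1)) : r 1 ≤ r i.succ :=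
    hr.monotone (Fin.succ_le_succ_iff.2 (Fin.zero_le i))
  have hc1 (j : Fin (k + 1)) : c 1 ≤ c j.succ :=
    hc.monotone (Fin.succ_le_succ_iff.2 (Fin.zero_le j))
  have hr2 (i : Fin k) : r 1 < r i.succ.succ := hr (Fin.succ_lt_succ_iff.2 (Fin.succ_pos i))
  have hc2 (j : Fin k) : c 1 < c j.succ.succ := hc (Fin.succ_lt_succ_iff.2 (Fin.succ_pos j))
  have hr01 : r 0 < r 1 := hr Fin.zero_lt_one
  have hc01 : c 0 < c 1 := hc Fin.zero_lt_one
  by_cases hrc : r 1 = r 0 + 1 ∧ c 1 = c 0 + 1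
  · -- the first column is `(s, t, 0, …)`, and the cofactor of `t` has first row `(1, 0, …)`
    obtain ⟨hr1', hc1'⟩ := hrc
    have hgap : minor (tridiag s t) (r ∘ Fin.succAbove 1) (c ∘ Fin.succ) =
        minor (tridiag s t) (r ∘ Fin.succ ∘ Fin.succ) (c ∘ Fin.succ ∘ Fin.succ) := by
      rw [minor_succ_of_row _ _ fun j => tridiag_eq_zero_above (by simp; grind)]
      have hrows : (r ∘ Fin.succAbove 1) ∘ Fin.succ = r ∘ Fin.succ ∘ Fin.succ := by
        funext i; simp [Fin.one_succAbove_succ]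
      simp [hrows, h0, hc1']
      rfl
    have hnext := hdiag _ _ (hr.comp (Fin.strictMono_succ)) (hc.comp (Fin.strictMono_succ))
      (by simp [hr1', hc1', h0])
    rw [minor_succ_succ_of_col r c fun i => tridiag_eq_zero_below (by grind), hgap, h0,
      tridiag_self, hr1', h0, tridiag_succ_self]
    set tail2 := minor (tridiag s t) (r ∘ Fin.succ ∘ Fin.succ) (c ∘ Fin.succ ∘ Fin.succ)
    rw [show s * tail - t * tail2 - t * tail = (tail - t * tail2) + (s - 1 - t) * tail by ring]
    exact P.add_mem hnext (P.mul_mem hst htail)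
  · suffices minor (tridiag s t) r c = s * tail by
      rw [this, show s * tail - t * tail = (s - 1 - t) * tail + tail by ring]
      exact P.add_mem (P.mul_mem hst htail) htail
    rcases not_and_or.1 hrc with hr1' | hc1'
    · rw [minor_succ_of_col r c fun i => tridiag_eq_zero_below (by grind), h0, tridiag_self]
    · rw [minor_succ_of_row r c fun j => tridiag_eq_zero_above (by grind), h0, tridiag_self]

theorem isTotallyNonneg_tridiag (ht : t ∈ P) (hst : s - 1 - t ∈ P) :
    IsTotallyNonneg P (tridiag s t) := by
  suffices ∀ k, (∀ r c : Fin k → ℕ, StrictMono r → StrictMono c → minor (tridiag s t) r c ∈ P) ∧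
      ∀ r c : Fin (k + 1) → ℕ, StrictMono r → StrictMono c → r 0 = c 0 →
        minor (tridiag s t) r c - t * minor (tridiag s t) (r ∘ Fin.succ) (c ∘ Fin.succ) ∈ P from
    fun k => (this k).1
  intro k
  induction k with
  | zero =>
    refine ⟨fun r c _ _ => by simp [P.one_mem], fun r c _ _ h0 => ?_⟩
    rw [minor, Matrix.det_fin_one, Matrix.of_apply, h0, tridiag_self, minor_fin_zero,
      show s - t * 1 = (s - 1 - t) + 1 by ring]
    exact P.add_mem hst P.one_mem
  | succ k ih =>
    have hk := fun r c (hr : StrictMono r) (hc : StrictMono c) =>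
      minor_tridiag_mem ht ih.1 ih.2 hr hc
    exact ⟨hk, fun r c hr hc h0 => minor_tridiag_sub_mem hst hk ih.2 hr hc h0⟩

end Tridiagonal

section Production

variable {R : Type*} [CommRing R] {P : Subsemiring R} {b J : ℕ → ℕ → R}

theorem sum_range_mul_eq_of_lt (hzero : ∀ n k, n < k → b n k = 0) {n L : ℕ} (hL : n < L)
    (f : ℕ → R) : ∑ l ∈ range L, b n l * f l = ∑ l ∈ range (n + 1), b n l * f l :=
  (sum_subset (range_subset_range.2 hL) fun l _ hl => by
    rw [hzero n l (by simpa using hl), zero_mul]).symm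

theorem isTotallyNonneg_of_production (hJ : IsTotallyNonneg P J) (h00 : b 0 0 = 1)
    (hzero : ∀ n k, n < k → b n k = 0)
    (hstep : ∀ n k, b (n + 1) k = ∑ l ∈ range (n + 1), b n l * J l k) :
    IsTotallyNonneg P b := by
  -- a top row `0` is the unit row `e₀` and is split off, lowering `k`; otherwise factoring
  -- through `J` lowers every `r i`
  suffices ∀ N k (r c : Fin k → ℕ), StrictMono r → StrictMono c → (∀ i, r i + k ≤ N) →
      minor b r c ∈ P from
    fun k r c hr hc => this _ k r c hr hc fun i => Nat.add_le_add_right (le_sup (mem_univ i)) k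
  intro N
  induction N with
  | zero =>
    rintro (_ | k) r c - - hN
    · simp [P.one_mem]
    · have := hN 0
      omega
  | succ N ih =>
    rintro (_ | k) r c hr hc hN
    · simp [P.one_mem]
    by_cases hr0 : r 0 = 0
    · have hrow (j) (hj : 0 < c j) : b (r 0) (c j) = 0 := by rw [hr0]; exact hzero 0 _ hj
      by_cases hc0 : c 0 = 0
      · rw [minor_succ_of_row r c fun j => hrow _ (hc0 ▸ hc (Fin.succ_pos j)), hr0, hc0, h00,
          one_mul]
        exact ih k _ _ (hr.comp Fin.strictMono_succ) (hc.comp Fin.strictMono_succ)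
          fun i => by have := hN i.succ; dsimp only [Function.comp_apply]; omega
      · rw [minor_eq_zero_of_row r c 0 fun j =>
          hrow j (by have := hc.monotone (Fin.zero_le j); omega)]
        exact P.zero_mem
    · have hpos (i) : 0 < r i := by have := hr.monotone (Fin.zero_le i); omega
      refine minor_mem_of_eq_sum_mul (A := fun n l => b (n - 1) l) (L := N)
        (fun i j => ?_) (fun f hf => ?_) (fun f hf => hJ _ _ _ hf hc)
      · have := hN i
        have := hpos i
        rw [sum_range_mul_eq_of_lt hzero (n := r i - 1) (by omega), ← hstep,
          Nat.sub_add_cancel (hpos i)]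
      · refine ih (k + 1) (fun i => r i - 1) f (fun i j hij => ?_) hf fun i => ?_
        · have := hr hij; have := hpos i; dsimp only; omega
        · have := hN i; have := hpos i; omega

theorem eq_sum_mul_tridiag {s t : R} (hzero : ∀ n k, n < k → b n k = 0)
    (hrec0 : ∀ n, b (n + 1) 0 = s * b n 0 + t * b n 1)
    (hrec : ∀ n k, b (n + 1) (k + 1) = b n k + s * b n (k + 1) + t * b n (k + 2)) (n k : ℕ) :
    b (n + 1) k = ∑ l ∈ range (n + 1), b n l * tridiag s t l k := by
  rw [← sum_range_mul_eq_of_lt hzero (L := n + k + 3) (by omega)]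
  simp only [tridiag_eq_add, mul_add, sum_add_distrib, mul_ite, mul_zero, sum_ite_eq', mem_range]
  cases k with
  | zero => simp [hrec0]; ring
  | succ k =>
    simp (disch := omega) only [add_left_inj, sum_ite_eq', mem_range, mul_one, if_pos]
    rw [hrec]
    ring

end Production

section Hankel

variable {R : Type*} [CommRing R] {P : Subsemiring R} {b J : ℕ → ℕ → R} {d : ℕ → R}

theorem sum_succ_left_eq_sum_succ_right (hzero : ∀ n k, n < k → b n k = 0)
    (hstep : ∀ n k, b (n + 1) k = ∑ l ∈ range (n + 1), b n l * J l k)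
    (hsymm : ∀ l m, J l m * d m = J m l * d l) {i j L : ℕ} (hi : i < L) (hj : j < L) :
    ∑ l ∈ range L, b (i + 1) l * d l * b j l = ∑ m ∈ range L, b i m * d m * b (j + 1) m := by
  have hstepL {n} (hn : n < L) (k) : b (n + 1) k = ∑ m ∈ range L, b n m * J m k := by
    rw [hstep, sum_range_mul_eq_of_lt hzero hn]
  calc ∑ l ∈ range L, b (i + 1) l * d l * b j l
      = ∑ m ∈ range L, ∑ l ∈ range L, b i m * (J m l * d l) * b j l := by
        simp_rw [hstepL hi, sum_mul]
        rw [sum_comm]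
        exact sum_congr rfl fun m _ => sum_congr rfl fun l _ => by ring
    _ = ∑ m ∈ range L, b i m * d m * ∑ l ∈ range L, b j l * J l m := by
        simp_rw [mul_sum]
        exact sum_congr rfl fun m _ => sum_congr rfl fun l _ => by rw [hsymm]; ring
    _ = ∑ m ∈ range L, b i m * d m * b (j + 1) m := by
        simp_rw [hstepL hj]

theorem moment_eq_sum (h00 : b 0 0 = 1) (hzero : ∀ n k, n < k → b n k = 0)
    (hstep : ∀ n k, b (n + 1) k = ∑ l ∈ range (n + 1), b n l * J l k)
    (hsymm : ∀ l m, J l m * d m = J m l * d l) (hd0 : d 0 = 1) (i j L : ℕ) (hL : i + j < L) :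
    b (i + j) 0 = ∑ l ∈ range L, b i l * d l * b j l := by
  induction j generalizing i with
  | zero =>
    rw [sum_eq_single_of_mem 0 (by simp; omega) fun l _ hl => by
      rw [hzero 0 l (Nat.pos_of_ne_zero hl), mul_zero]]
    simp [h00, hd0]
  | succ j ih =>
    rw [← add_assoc, add_right_comm, ih (i + 1) (by omega),
      sum_succ_left_eq_sum_succ_right hzero hstep hsymm (by omega) (by omega)]

theorem isTotallyNonneg_hankel {a : ℕ → R} (hb : IsTotallyNonneg P b) (hd : ∀ l, d l ∈ P)
    (ha : ∀ i j L, i + j < L → a (i + j) = ∑ l ∈ range L, b i l * d l * b j l) :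
    IsTotallyNonneg P (fun i j => a (i + j)) := by
  intro k r c hr hc
  have hB (f : Fin k → ℕ) :
      minor (fun l j => d l * b j l) f c = (∏ i, d (f i)) * minor b c f := by
    unfold minor
    rw [← Matrix.det_transpose (Matrix.of fun i j => b (c i) (f j)), ← Matrix.det_mul_column]
    rfl
  refine minor_mem_of_eq_sum_mul (A := b) (B := fun l j => d l * b j l)
    (L := univ.sup r + univ.sup c + 1) (fun i j => ?_) (fun f hf => hb _ _ _ hr hf)
    (fun f hf => hB f ▸ P.mul_mem (P.prod_mem fun i _ => hd (f i)) (hb _ _ _ hc hf))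
  have := le_sup (f := r) (mem_univ i)
  have := le_sup (f := c) (mem_univ j)
  show a (r i + c j) = ∑ l ∈ range _, b (r i) l * (d l * b (c j) l)
  simp_rw [ha (r i) (c j) (univ.sup r + univ.sup c + 1) (by omega), mul_assoc]

end Hankel

section QNonneg

open Polynomial

def qNonnegSubsemiring : Subsemiring ℝ[X] where
  carrier := {f | QPolyNonneg f}
  mul_mem' {f g} hf hg i := by
    rw [coeff_mul]
    exact Finset.sum_nonneg fun p _ => mul_nonneg (hf p.1) (hg p.2)
  one_mem' i := by
    rw [coeff_one]
    positivity
  add_mem' hf hg i := by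
    rw [coeff_add]
    exact add_nonneg (hf i) (hg i)
  zero_mem' i := by simp

theorem X_mem_qNonnegSubsemiring : X ∈ qNonnegSubsemiring :=
  show QPolyNonneg X from fun i => by
    rw [coeff_X]
    positivity

end QNonneg

/-- Example 3.2: the polynomials coming from Motzkin paths with level-steps
weighted `1 + q + q²` and down-steps weighted `q` form a Stieltjes moment
sequence of polynomials. -/
theorem example32_stieltjes
    (b : ℕ → ℕ → Polynomial ℝ)
    (h00 : b 0 0 = 1)
    (hzero : ∀ n k, n < k → b n k = 0)
    (hrec0 : ∀ n, b (n + 1) 0 =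
      (1 + Polynomial.X + Polynomial.X ^ 2) * b n 0 + Polynomial.X * b n 1)
    (hrec : ∀ n k, b (n + 1) (k + 1) =
      b n k + (1 + Polynomial.X + Polynomial.X ^ 2) * b n (k + 1)
        + Polynomial.X * b n (k + 2)) :
    qTP (fun i j => b (i + j) 0) := by
  have hX := X_mem_qNonnegSubsemiring
  have hJ : IsTotallyNonneg qNonnegSubsemiring (tridiag (1 + Polynomial.X + Polynomial.X ^ 2)
      Polynomial.X) := by
    refine isTotallyNonneg_tridiag hX ?_
    rw [show (1 + Polynomial.X + Polynomial.X ^ 2 : Polynomial ℝ) - 1 - Polynomial.X =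
      Polynomial.X ^ 2 by ring]
    exact pow_mem hX 2
  have hstep := eq_sum_mul_tridiag hzero hrec0 hrec
  exact isTotallyNonneg_hankel (a := fun n => b n 0)
    (isTotallyNonneg_of_production hJ h00 hzero hstep) (pow_mem hX)
    (moment_eq_sum h00 hzero hstep tridiag_mul_pow_symm (pow_zero _))
end

section
/- Fix an integer s ≥ 0 and define t^{(s)}_k(p,q) = q if k ≤ s and t^{(s)}_k(p,q) = p if k > s. Define polynomials c^{(s)}_{n,k}(p,q) in ℝ[p,q] by c^{(s)}_{0,0}(p,q) = 1, c^{(s)}_{n,k}(p,q) = 0 unless 0 ≤ k ≤ n, c^{(s)}_{n+1,0}(p,q) = (1+p+q)·c^{(s)}_{n,0}(p,q) + t^{(s)}_1(p,q)·c^{(s)}_{n,1}(p,q), and c^{(s)}_{n+1,k}(p,q) = c^{(s)}_{n,k−1}(p,q) + (1+p+q)·c^{(s)}_{n,k}(p,q) + t^{(s)}_{k+1}(p,q)·c^{(s)}_{n,k+1}(p,q) for 1 ≤ k ≤ n. Then for every s ≥ 0, the sequence (c^{(s)}_{n,0}(p,q))_{n ≥ 0} is a Stieltjes moment sequence of polynomials,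 i.e., the Hankel matrix [c^{(s)}_{i+j,0}(p,q)]_{i,j ≥ 0} is (p,q)-totally positive. -/
/-!
The Hankel matrix factors as `c W cᵀ`: here `c` is the output matrix of the tridiagonal production
matrix `T` (`T i (i+1) = 1`, `T i i = 1 + p + q`, `T (i+1) i = t (i+1)`), and the weights
`w m = t 1 ⋯ t m` make `T` symmetric, which gives `c (a+b) 0 = ∑ m, c a m * w m * c b m`.
By Cauchy–Binet it suffices that `c` is totally positive, and that follows from the total
positivity of `T` by applying Cauchy–Binet again to `c (n+1) = c n * T`. Every minor of a
tridiagonal matrix is either block triangular or a principal minor on an interval. Such a minor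
`K a L` satisfies `K a (L+2) = (1+p+q) K (a+1) (L+1) - t (a+1) K (a+2) L`, and because
`1 + p + q - 1 - t i` is `p` or `q`, induction on `L` shows that `K a (L+1) - μ K (a+1) L`
has nonnegative coefficients whenever `1 + p + q - 1 - μ` has.
-/

/-- A multivariable real polynomial is nonnegative if all of its coefficients
are nonnegative. -/
def PolyNonneg {m : ℕ} (f : MvPolynomial (Fin m) ℝ) : Prop :=
  ∀ d : Fin m →₀ ℕ, 0 ≤ f.coeff d

/-- An infinite matrix of multivariable real polynomials is totally positive if
every minor has all nonnegative coefficients. -/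
def xTP {m : ℕ} (M : ℕ → ℕ → MvPolynomial (Fin m) ℝ) : Prop :=
  ∀ (k : ℕ) (r c : Fin k → ℕ), StrictMono r → StrictMono c →
    PolyNonneg (Matrix.det (Matrix.of fun i j => M (r i) (c j)))

/-- The variable `p` in `ℝ[p,q]`. -/
noncomputable def P : MvPolynomial (Fin 2) ℝ := MvPolynomial.X 0

/-- The variable `q` in `ℝ[p,q]`. -/
noncomputable def Q : MvPolynomial (Fin 2) ℝ := MvPolynomial.X 1

open Finset Matrix

namespace Matrix

variable {R : Type*} [CommRing R]

theorem det_mul_eq_sum_det_submatrix {k N : ℕ} (A : Matrix (Fin k) (Fin N) R)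
    (B : Matrix (Fin N) (Fin k) R) :
    (A * B).det = ∑ g : {g : Fin k → Fin N // StrictMono g},
      (A.submatrix id g).det * (B.submatrix g id).det := by
  have expand :
      (A * B).det = ∑ p : Fin k → Fin N, (∏ i, B (p i) i) * (A.submatrix id p).det := by
    simp only [det_apply', mul_apply, prod_univ_sum, Fintype.piFinset_univ, mul_sum,
      submatrix_apply, id]
    rw [sum_comm]
    refine sum_congr rfl fun p _ => sum_congr rfl fun σ _ => ?_
    rw [prod_mul_distrib]
    ring
  -- an injective `p` is uniquely `g ∘ σ` with `g` increasing; the other `p` contribute `0`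
  have reindex : ∑ p : Fin k → Fin N, (∏ i, B (p i) i) * (A.submatrix id p).det =
      ∑ x : {g : Fin k → Fin N // StrictMono g} × Equiv.Perm (Fin k),
        (∏ i, B (x.1.1 (x.2 i)) i) * (A.submatrix id (x.1.1 ∘ x.2)).det := by
    refine (Fintype.sum_of_injective
      (fun x : {g : Fin k → Fin N // StrictMono g} × Equiv.Perm (Fin k) => x.1.1 ∘ x.2)
      ?_ _ _ ?_ fun _ => rfl).symm
    · rintro ⟨⟨g, hg⟩, σ⟩ ⟨⟨g', hg'⟩, σ'⟩ h
      have hrange := congrArg Set.range h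
      simp only [Set.range_comp, Equiv.range_eq_univ, Set.image_univ] at hrange
      obtain rfl : g = g' := (hg.range_inj hg').1 hrange
      obtain rfl : σ = σ' := Equiv.ext fun i => hg.injective (congrFun h i)
      rfl
    · intro p hp
      have hinj : ¬ Function.Injective p := fun hinj => hp
        ⟨(⟨p ∘ Tuple.sort p, (Tuple.monotone_sort p).strictMono_of_injective
          (hinj.comp (Tuple.sort p).injective)⟩, (Tuple.sort p)⁻¹), by ext i; simp⟩
      obtain ⟨i, j, hij, hne⟩ : ∃ i j, p i = p j ∧ i ≠ j := by
        simpa [Function.Injective] using hinj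
      rw [det_zero_of_column_eq hne fun l => by simp [hij], mul_zero]
  rw [expand, reindex, Fintype.sum_prod_type]
  refine sum_congr rfl fun g _ => ?_
  have hperm : ∀ σ : Equiv.Perm (Fin k),
      A.submatrix id (g.1 ∘ σ) = (A.submatrix id g.1).submatrix id σ := fun σ => rfl
  simp only [hperm, det_permute', det_apply' (B.submatrix g.1 id), submatrix_apply, id, mul_sum]
  exact sum_congr rfl fun σ _ => by ring

theorem det_succ_eq_of_row_zero {n : ℕ} (M : Matrix (Fin (n + 1)) (Fin (n + 1)) R)
    (h : ∀ j, j ≠ 0 → M 0 j = 0) : M.det = M 0 0 * (M.submatrix Fin.succ Fin.succ).det := by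
  rw [det_succ_row_zero, Fin.sum_univ_succ]
  simp [h _ (Fin.succ_ne_zero _)]

theorem det_succ_eq_of_col_zero {n : ℕ} (M : Matrix (Fin (n + 1)) (Fin (n + 1)) R)
    (h : ∀ i, i ≠ 0 → M i 0 = 0) : M.det = M 0 0 * (M.submatrix Fin.succ Fin.succ).det := by
  rw [det_succ_column_zero, Fin.sum_univ_succ]
  simp [h _ (Fin.succ_ne_zero _)]

end Matrix

section TotalPositivity

variable {R : Type*} [CommRing R] (S : Subsemiring R)

def IsTotallyPositive (M : ℕ → ℕ → R) : Prop :=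
  ∀ (k : ℕ) (r c : Fin k → ℕ), StrictMono r → StrictMono c →
    (Matrix.of fun i j => M (r i) (c j)).det ∈ S

variable {S}

theorem det_sum_mul_mem {k : ℕ} (N : ℕ) (A : Fin k → ℕ → R) (B : ℕ → Fin k → R)
    (hA : ∀ g : Fin k → ℕ, StrictMono g → (Matrix.of fun i j => A i (g j)).det ∈ S)
    (hB : ∀ g : Fin k → ℕ, StrictMono g → (Matrix.of fun i j => B (g i) j).det ∈ S) :
    (Matrix.of fun i j => ∑ m ∈ range N, A i m * B m j).det ∈ S := by
  have hprod : (Matrix.of fun i j => ∑ m ∈ range N, A i m * B m j) =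
      (Matrix.of fun i (m : Fin N) => A i m) * Matrix.of fun (m : Fin N) j => B m j := by
    ext i j
    simp [Matrix.mul_apply, Fin.sum_univ_eq_sum_range (fun m => A i m * B m j)]
  rw [hprod, Matrix.det_mul_eq_sum_det_submatrix]
  exact sum_mem fun g _ =>
    mul_mem (hA _ (Fin.val_strictMono.comp g.2)) (hB _ (Fin.val_strictMono.comp g.2))

section Tridiagonal

def IsTridiagonal (T : ℕ → ℕ → R) : Prop :=
  ∀ i j, j + 1 < i ∨ i + 1 < j → T i j = 0

def intervalMatrix (T : ℕ → ℕ → R) (a L : ℕ) : Matrix (Fin L) (Fin L) R :=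
  Matrix.of fun i j => T (a + i) (a + j)

theorem eq_interval_of_forall_succ_lt {k : ℕ} {r c : Fin (k + 2) → ℕ} (hr : StrictMono r)
    (hc : StrictMono c)
    (h : ∀ i : Fin (k + 1), r i.succ < c i.castSucc + 2 ∧ c i.succ < r i.castSucc + 2)
    (i : Fin (k + 2)) : r i = r 0 + i ∧ c i = r 0 + i := by
  have hstep : ∀ i : Fin (k + 1), r i.castSucc = c i.castSucc ∧
      r i.succ = r i.castSucc + 1 ∧ c i.succ = c i.castSucc + 1 := by
    intro i
    have := h i
    have := hr (Fin.castSucc_lt_succ (i := i))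
    have := hc (Fin.castSucc_lt_succ (i := i))
    omega
  induction i using Fin.induction with
  | zero => simpa using (hstep 0).1.symm
  | succ i ih =>
    simp only [Fin.val_succ, Fin.val_castSucc] at ih ⊢
    have := hstep i
    omega

variable {T : ℕ → ℕ → R}

theorem IsTridiagonal.isTotallyPositive (hT : IsTridiagonal T) (hentry : ∀ i j, T i j ∈ S)
    (hinterval : ∀ a L, (intervalMatrix T a L).det ∈ S) : IsTotallyPositive S T := by
  intro k
  induction k using Nat.strong_induction_on with
  | _ k ih =>
  intro r c hr hc
  set M := Matrix.of fun i j => T (r i) (c j)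
  have block_mem : ∀ (p : Fin k → Prop) [DecidablePred p] (x : Fin k), ¬ p x →
      (M.toSquareBlockProp p).det ∈ S := by
    intro p _ x hx
    let e := Fintype.orderIsoFinOfCardEq {j // p j} rfl
    rw [← Matrix.det_submatrix_equiv_self e.toEquiv]
    exact ih _ ((Fintype.card_subtype_lt hx).trans_eq (Fintype.card_fin k)) _ _
      (hr.comp ((Subtype.strictMono_coe _).comp e.strictMono))
      (hc.comp ((Subtype.strictMono_coe _).comp e.strictMono))
  rcases k with _ | _ | k
  · simp
  · simpa [M] using hentry _ _
  -- a jump by two between consecutive rows or columns makes `M` block triangular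
  by_cases hjump :
      ∃ i : Fin (k + 1), c i.castSucc + 2 ≤ r i.succ ∨ r i.castSucc + 2 ≤ c i.succ
  · obtain ⟨i, hlow | hup⟩ := hjump
    · rw [M.twoBlockTriangular_det (· ≤ i.castSucc) fun a ha b hb => hT _ _ (.inl ?_)]
      · exact mul_mem (block_mem _ i.succ (by simp [Fin.le_def]))
          (block_mem _ i.castSucc (by simp))
      have := hr.monotone (Fin.castSucc_lt_iff_succ_le.1 (not_le.1 ha))
      have := hc.monotone hb
      omega
    · rw [M.twoBlockTriangular_det' (· ≤ i.castSucc) fun a ha b hb => hT _ _ (.inr ?_)]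
      · exact mul_mem (block_mem _ i.succ (by simp [Fin.le_def]))
          (block_mem _ i.castSucc (by simp))
      have := hc.monotone (Fin.castSucc_lt_iff_succ_le.1 (not_le.1 hb))
      have := hr.monotone ha
      omega
  · push Not at hjump
    have hrun := eq_interval_of_forall_succ_lt hr hc hjump
    convert hinterval (r 0) (k + 2) using 2
    ext i j
    simp [M, intervalMatrix, (hrun i).1, (hrun j).2]

omit [CommRing R] in
theorem intervalMatrix_submatrix_succ (T : ℕ → ℕ → R) (a L : ℕ) :
    (intervalMatrix T a (L + 1)).submatrix Fin.succ Fin.succ = intervalMatrix T (a + 1) L := by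
  ext i j
  simp [intervalMatrix, add_assoc, add_comm 1]

theorem IsTridiagonal.det_intervalMatrix_add_two (hT : IsTridiagonal T) (a L : ℕ) :
    (intervalMatrix T a (L + 2)).det = T a a * (intervalMatrix T (a + 1) (L + 1)).det -
      T a (a + 1) * T (a + 1) a * (intervalMatrix T (a + 2) L).det := by
  have hfar : ∀ j : Fin L, intervalMatrix T a (L + 2) 0 j.succ.succ = 0 := fun j =>
    hT _ _ (.inr (by simp))
  have hsecond : ((intervalMatrix T a (L + 2)).submatrix Fin.succ (Fin.succAbove 1)).det =
      T (a + 1) a * (intervalMatrix T (a + 2) L).det := by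
    rw [Matrix.det_succ_eq_of_col_zero _ fun i hi =>
      hT _ _ (.inl (by simpa [intervalMatrix] using Fin.pos_of_ne_zero hi))]
    congr 2
    ext i j
    rw [← Fin.succ_zero_eq_one, Matrix.submatrix_apply, Matrix.submatrix_apply,
      Fin.succ_succAbove_succ, Fin.succAbove_zero]
    simp [intervalMatrix, add_assoc, add_comm 2]
  rw [Matrix.det_succ_row_zero, Fin.sum_univ_succ, Fin.sum_univ_succ]
  simp only [hfar, Fin.succ_zero_eq_one, hsecond, Fin.succAbove_zero,
    intervalMatrix_submatrix_succ]
  simp only [intervalMatrix, of_apply, Fin.val_zero, Fin.val_one, Fin.val_succ, mul_zero,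
    zero_mul, sum_const_zero, add_zero]
  ring

theorem IsTridiagonal.det_intervalMatrix_mem (hT : IsTridiagonal T) (hdiag : ∀ a, T a a - 1 ∈ S)
    (hdominant : ∀ a, T (a + 1) (a + 1) - 1 - T a (a + 1) * T (a + 1) a ∈ S) (a L : ℕ) :
    (intervalMatrix T a L).det ∈ S := by
  have key : ∀ L a μ, T a a - 1 - μ ∈ S →
      (intervalMatrix T a (L + 1)).det - μ * (intervalMatrix T (a + 1) L).det ∈ S := by
    intro L
    induction L with
    | zero =>
      intro a μ h
      have : T a a - μ = 1 + (T a a - 1 - μ) := by ring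
      simpa [intervalMatrix, this] using add_mem (one_mem S) h
    | succ L ih =>
      intro a μ h
      have h0 := ih (a + 1) 0 (by simpa using hdiag (a + 1))
      rw [zero_mul, sub_zero] at h0
      rw [hT.det_intervalMatrix_add_two]
      convert add_mem (mul_mem h h0) (ih (a + 1) _ (hdominant a)) using 1
      ring
  cases L with
  | zero => simp [intervalMatrix]
  | succ L => simpa using key L a 0 (by simpa using hdiag a)

end Tridiagonal

section Production

variable {T c : ℕ → ℕ → R} (hzero : ∀ n k, n < k → c n k = 0)
  (hprod : ∀ n j, c (n + 1) j = ∑ m ∈ range (n + 1), c n m * T m j)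

include hzero in
theorem sum_range_mul_eq_of_lt_s9 {n N : ℕ} (h : n < N) (f : ℕ → R) :
    ∑ m ∈ range N, c n m * f m = ∑ m ∈ range (n + 1), c n m * f m :=
  (sum_subset (range_subset_range.2 h) fun m _ hm => by
    rw [hzero _ _ (by simpa using hm), zero_mul]).symm

include hzero hprod in
theorem production_eq_sum_range {n N : ℕ} (h : n < N) (j : ℕ) :
    c (n + 1) j = ∑ m ∈ range N, c n m * T m j := by
  rw [hprod, sum_range_mul_eq_of_lt_s9 hzero h]

include hzero hprod in
theorem isTotallyPositive_of_production (hT : IsTotallyPositive S T) (h00 : c 0 0 = 1) :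
    IsTotallyPositive S c := by
  intro k
  induction k with
  | zero => simp
  | succ k ihk =>
  suffices ∀ n (r d : Fin (k + 1) → ℕ), r 0 = n → StrictMono r → StrictMono d →
      (Matrix.of fun i j => c (r i) (d j)).det ∈ S from
    fun r d hr hd => this _ r d rfl hr hd
  -- induction on the first row: row `0` of `c` is a unit vector, and `c (n+1) = c n * T`
  -- lowers all rows by one
  intro n
  induction n with
  | zero =>
    intro r d hr0 hr hd
    by_cases hd0 : d 0 = 0
    · rw [Matrix.det_succ_eq_of_row_zero _ fun j hj =>
        hzero _ _ (by simpa [hr0, hd0] using hd (Fin.pos_of_ne_zero hj))]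
      rw [Matrix.of_apply, hr0, hd0, h00, one_mul]
      exact ihk _ _ (hr.comp Fin.strictMono_succ) (hd.comp Fin.strictMono_succ)
    · rw [Matrix.det_eq_zero_of_row_eq_zero (0 : Fin (k + 1)) fun j => hzero _ _
        (by simpa [hr0] using (Nat.pos_of_ne_zero hd0).trans_le (hd.monotone (Fin.zero_le j)))]
      exact zero_mem S
  | succ n ihn =>
    intro r d hr0 hr hd
    have hpos : ∀ i, n + 1 ≤ r i := fun i => hr0 ▸ hr.monotone i.zero_le
    have hentry : (Matrix.of fun i j => c (r i) (d j)) =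
        Matrix.of fun i j => ∑ m ∈ range (r (Fin.last k)), c (r i - 1) m * T m (d j) := by
      ext i j
      have := hpos i
      have := hr.monotone i.le_last
      simp only [Matrix.of_apply]
      rw [← production_eq_sum_range hzero hprod (by omega), Nat.sub_add_cancel (by omega)]
    rw [hentry]
    refine det_sum_mul_mem _ _ _ (fun g hg => ihn _ g (by simp [hr0]) (fun i j hij => ?_) hg)
      fun g hg => hT _ g d hg hd
    have := hpos i
    have := hr hij
    show r i - 1 < r j - 1
    omega

include hzero hprod in
theorem moment_eq_sum_mul_weight (h00 : c 0 0 = 1) {w : ℕ → R} (hw0 : w 0 = 1)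
    (hsymm : ∀ i j, T i j * w j = w i * T j i) (b : ℕ) :
    ∀ a N, a + b < N → c (a + b) 0 = ∑ m ∈ range N, c a m * (w m * c b m) := by
  induction b with
  | zero =>
    intro a N h
    rw [sum_eq_single 0 (fun m _ hm => by rw [hzero 0 m (Nat.pos_of_ne_zero hm), mul_zero,
      mul_zero]) (fun h0 => absurd (mem_range.2 (by omega)) h0), hw0, h00, mul_one, mul_one,
      add_zero]
  | succ b ih =>
    intro a N h
    calc c (a + (b + 1)) 0 = ∑ m ∈ range N, c (a + 1) m * (w m * c b m) := by
          rw [← ih (a + 1) N (by omega), add_right_comm, add_assoc]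
      _ = ∑ m ∈ range N, ∑ j ∈ range N, c a j * T j m * (w m * c b m) := by
          simp only [production_eq_sum_range hzero hprod (show a < N by omega), sum_mul]
      _ = ∑ j ∈ range N, c a j * (w j * ∑ m ∈ range N, c b m * T m j) := by
          rw [sum_comm]
          refine sum_congr rfl fun j _ => ?_
          simp only [mul_sum]
          refine sum_congr rfl fun m _ => ?_
          linear_combination c a j * c b m * hsymm j m
      _ = ∑ j ∈ range N, c a j * (w j * c (b + 1) j) := by
          simp only [← production_eq_sum_range hzero hprod (show b < N by omega)]

include hzero hprod in
theorem isTotallyPositive_hankel (hT : IsTotallyPositive S T) (h00 : c 0 0 = 1) {w : ℕ → R}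
    (hw : ∀ m, w m ∈ S) (hw0 : w 0 = 1) (hsymm : ∀ i j, T i j * w j = w i * T j i) :
    IsTotallyPositive S fun i j => c (i + j) 0 := by
  have hc := isTotallyPositive_of_production hzero hprod hT h00
  intro k ρ γ hρ hγ
  set N := ∑ i, ρ i + ∑ j, γ j + 1
  have hentry : (Matrix.of fun i j => c (ρ i + γ j) 0) =
      Matrix.of fun i j => ∑ m ∈ range N, c (ρ i) m * (w m * c (γ j) m) := by
    ext i j
    have := single_le_sum (fun i _ => Nat.zero_le (ρ i)) (mem_univ i)
    have := single_le_sum (fun j _ => Nat.zero_le (γ j)) (mem_univ j)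
    exact moment_eq_sum_mul_weight hzero hprod h00 hw0 hsymm _ _ _ (by omega)
  rw [hentry]
  refine det_sum_mul_mem N _ _ (fun g hg => hc _ _ _ hρ hg) fun g hg => ?_
  have hfactor : (Matrix.of fun i j => w (g i) * c (γ j) (g i)).det =
      (∏ i, w (g i)) * (Matrix.of fun i j => c (γ i) (g j))ᵀ.det :=
    Matrix.det_mul_column (fun i => w (g i)) _
  rw [hfactor, Matrix.det_transpose]
  exact mul_mem (prod_mem fun i _ => hw _) (hc _ _ _ hγ hg)

end Production

section Jacobi

def jacobiMatrix (b : R) (t : ℕ → R) (i j : ℕ) : R :=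
  if j = i + 1 then 1 else if i = j then b else if i = j + 1 then t i else 0

variable {b : R} {t : ℕ → R}

theorem jacobiMatrix_isTridiagonal (b : R) (t : ℕ → R) : IsTridiagonal (jacobiMatrix b t) := by
  intro i j h
  rw [jacobiMatrix, if_neg (by omega), if_neg (by omega), if_neg (by omega)]

theorem jacobiMatrix_isTotallyPositive (hb : b - 1 ∈ S) (ht : ∀ i, t i ∈ S)
    (hbt : ∀ i, b - 1 - t i ∈ S) : IsTotallyPositive S (jacobiMatrix b t) := by
  have hentry : ∀ i j, jacobiMatrix b t i j ∈ S := by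
    intro i j
    unfold jacobiMatrix
    split_ifs
    exacts [one_mem S, by simpa using add_mem hb (one_mem S), ht i, zero_mem S]
  exact (jacobiMatrix_isTridiagonal b t).isTotallyPositive hentry
    ((jacobiMatrix_isTridiagonal b t).det_intervalMatrix_mem
      (fun a => by simpa [jacobiMatrix] using hb)
      fun a => by simpa [jacobiMatrix, add_assoc] using hbt (a + 1))

theorem jacobiMatrix_mul_prod_symm (i j : ℕ) :
    jacobiMatrix b t i j * ∏ m ∈ range j, t (m + 1) =
      (∏ m ∈ range i, t (m + 1)) * jacobiMatrix b t j i := by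
  unfold jacobiMatrix
  split_ifs <;> first | (exfalso; omega) | (subst_vars; simp [prod_range_succ, mul_comm])

theorem sum_mul_jacobiMatrix_zero {N : ℕ} (hN : 2 ≤ N) (f : ℕ → R) :
    ∑ m ∈ range N, f m * jacobiMatrix b t m 0 = b * f 0 + t 1 * f 1 := by
  have hsplit : ∀ m, jacobiMatrix b t m 0 =
      (if m = 0 then b else 0) + (if m = 1 then t 1 else 0) := by
    intro m
    unfold jacobiMatrix
    split_ifs <;> first | (exfalso; omega) | (subst_vars; simp)
  simp only [hsplit, mul_add, mul_ite, mul_zero, sum_add_distrib, sum_ite_eq', mem_range,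
    if_pos (show 0 < N by omega), if_pos (show 1 < N by omega)]
  ring

theorem sum_mul_jacobiMatrix_succ {N j : ℕ} (hN : j + 3 ≤ N) (f : ℕ → R) :
    ∑ m ∈ range N, f m * jacobiMatrix b t m (j + 1) =
      f j + b * f (j + 1) + t (j + 2) * f (j + 2) := by
  have hsplit : ∀ m, jacobiMatrix b t m (j + 1) = (if m = j then 1 else 0) +
      (if m = j + 1 then b else 0) + (if m = j + 2 then t (j + 2) else 0) := by
    intro m
    unfold jacobiMatrix
    split_ifs <;> first | (exfalso; omega) | (subst_vars; simp)
  simp only [hsplit, mul_add, mul_ite, mul_zero, sum_add_distrib, sum_ite_eq', mem_range,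
    if_pos (show j < N by omega), if_pos (show j + 1 < N by omega),
    if_pos (show j + 2 < N by omega)]
  ring

theorem eq_sum_mul_jacobiMatrix {c : ℕ → ℕ → R} (hzero : ∀ n k, n < k → c n k = 0)
    (hrec0 : ∀ n, c (n + 1) 0 = b * c n 0 + t 1 * c n 1)
    (hrec : ∀ n k, c (n + 1) (k + 1) = c n k + b * c n (k + 1) + t (k + 2) * c n (k + 2))
    (n j : ℕ) : c (n + 1) j = ∑ m ∈ range (n + 1), c n m * jacobiMatrix b t m j := by
  rw [← sum_range_mul_eq_of_lt_s9 hzero (show n < n + j + 3 by omega)]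
  cases j with
  | zero => rw [sum_mul_jacobiMatrix_zero (by omega), hrec0]
  | succ j => rw [sum_mul_jacobiMatrix_succ (by omega), hrec]

end Jacobi

end TotalPositivity

def nonnegCoeffs (m : ℕ) : Subsemiring (MvPolynomial (Fin m) ℝ) where
  carrier := {f | PolyNonneg f}
  mul_mem' {f g} hf hg d := by
    rw [MvPolynomial.coeff_mul]
    exact sum_nonneg fun x _ => mul_nonneg (hf _) (hg _)
  one_mem' d := by
    rw [MvPolynomial.coeff_one]
    split_ifs <;> norm_num
  add_mem' hf hg d := by
    rw [MvPolynomial.coeff_add]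
    exact add_nonneg (hf d) (hg d)
  zero_mem' d := by simp

theorem X_mem_nonnegCoeffs {m : ℕ} (i : Fin m) :
    MvPolynomial.X i ∈ nonnegCoeffs m := fun d => by
  rw [MvPolynomial.coeff_X]
  split_ifs <;> norm_num

theorem xTP_iff {m : ℕ} (M : ℕ → ℕ → MvPolynomial (Fin m) ℝ) :
    xTP M ↔ IsTotallyPositive (nonnegCoeffs m) M :=
  Iff.rfl

/-- Example 3.3 (variant): with down-step weights `t⁽ˢ⁾ₖ = q` for `k ≤ s` and
`p` for `k > s`, the resulting sequence is a Stieltjes moment sequence of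
polynomials in `p` and `q`, for every `s ≥ 0`. -/
theorem example33_variant_stieltjes
    (s : ℕ)
    (t : ℕ → MvPolynomial (Fin 2) ℝ)
    (ht : ∀ k, t k = if k ≤ s then Q else P)
    (c : ℕ → ℕ → MvPolynomial (Fin 2) ℝ)
    (h00 : c 0 0 = 1)
    (hzero : ∀ n k, n < k → c n k = 0)
    (hrec0 : ∀ n, c (n + 1) 0 = (1 + P + Q) * c n 0 + t 1 * c n 1)
    (hrec : ∀ n k, c (n + 1) (k + 1) =
      c n k + (1 + P + Q) * c n (k + 1) + t (k + 2) * c n (k + 2)) :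
    xTP (fun i j => c (i + j) 0) := by
  have hP : P ∈ nonnegCoeffs 2 := X_mem_nonnegCoeffs 0
  have hQ : Q ∈ nonnegCoeffs 2 := X_mem_nonnegCoeffs 1
  have ht_mem : ∀ i, t i ∈ nonnegCoeffs 2 := fun i => by
    rw [ht]
    split_ifs
    exacts [hQ, hP]
  have hdominant : ∀ i, 1 + P + Q - 1 - t i ∈ nonnegCoeffs 2 := fun i => by
    rw [ht]
    split_ifs
    · convert hP using 1; ring
    · convert hQ using 1; ring
  have hT := jacobiMatrix_isTotallyPositive (by convert add_mem hP hQ using 1; ring) ht_mem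
    hdominant
  exact (xTP_iff _).2 <| isTotallyPositive_hankel hzero (eq_sum_mul_jacobiMatrix hzero hrec0 hrec)
    hT h00 (fun m => prod_mem fun i _ => ht_mem (i + 1)) (by simp) jacobiMatrix_mul_prod_symm
end
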